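/- arXiv:1502.05937 — 2 statements merged into one kernel-verified Lean document; each statement's English description precedes it below -/
import Mathlib

section
/- For a string X, let N_T(X) denote the number of rotations of T that are lexicographically smaller than X. Let W ∈ [1..σ]^m be a maximal repeat of T and let k ∈ [1..m] be such that W[i..m] is not left-maximal in T for every i ∈ [2..k]. Then for every character c ∈ [0..σ] and every i ∈ [1..k], N_T(W[i..m]c) − N_T(W[i..m]) = N_T(Wc) − N_T(W). Equivalently, writing [p_i..q_i] for the lexicographic interval of W[i..m] among the sorted rotations of T and [x_i..y_i] for that of W[i..m]c, one has x_i = p_i + x_1 − p_1 and y_i = p_i + y_1 − p_1 for all i ∈ [1..k]. -/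
/-! Basic definitions: strings are lists of naturals; the separator `#` is `0`;
the alphabet is `Σ = [1..σ]`. Occurrences are taken in the circular version of `T`. -/

noncomputable section
open Classical

/-- `T` is a string over the alphabet `[1..σ]` followed by the separator `# = 0`
(so `#` occurs in `T` exactly once, at the last position). -/
def Wellformed (σ : ℕ) (T : List ℕ) : Prop :=
  ∃ S : List ℕ, T = S ++ [0] ∧ ∀ c ∈ S, 1 ≤ c ∧ c ≤ σ

/-- The rotation of `T` starting at position `i`. -/
def rot (T : List ℕ) (i : ℕ) : List ℕ := T.drop i ++ T.take i

/-- `W` occurs at position `i` of the circular version of `T`. -/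
def CircOccAt (T W : List ℕ) (i : ℕ) : Prop :=
  ∀ j < W.length, W.getD j 0 = T.getD ((i + j) % T.length) 0

/-- `𝒫_T(W)`: the set of starting positions of occurrences of `W` in the circular
version of `T`. -/
def Pset (T W : List ℕ) : Finset ℕ :=
  (Finset.range T.length).filter (fun i => CircOccAt T W i)

/-- `W` occurs in the circular version of `T`. -/
def OccursCirc (T W : List ℕ) : Prop := (Pset T W).Nonempty

/-- `Σ^ℓ_T(W)`: the set of characters `a` such that `aW` occurs in circular `T`. -/
def SigmaL (T W : List ℕ) : Finset ℕ :=
  T.toFinset.filter (fun a => OccursCirc T (a :: W))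

/-- `Σ^r_T(W)`: the set of characters `b` such that `Wb` occurs in circular `T`. -/
def SigmaR (T W : List ℕ) : Finset ℕ :=
  T.toFinset.filter (fun b => OccursCirc T (W ++ [b]))

/-- `W` is left-maximal in `T`. -/
def LeftMaximal (T W : List ℕ) : Prop := 1 < (SigmaL T W).card

/-- `W` is right-maximal in `T`. -/
def RightMaximal (T W : List ℕ) : Prop := 1 < (SigmaR T W).card

/-- The (finite) collection of substrings of the circular version of `T`. -/
def circSubstrings (T : List ℕ) : Finset (List ℕ) :=
  ((Finset.range T.length) ×ˢ (Finset.range (T.length + 1))).image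
    (fun p => (rot T p.1).take p.2)

/-- `ℳ_T`: the set of nonempty maximal repeats of `T`, i.e. repeats that are both
left-maximal and right-maximal.  (Every maximal repeat occurs in circular `T` and has
length at most `|T|`, so it belongs to `circSubstrings T`.) -/
def MaxRepeats (T : List ℕ) : Finset (List ℕ) :=
  (circSubstrings T).filter
    (fun W => W ≠ [] ∧ 1 < (Pset T W).card ∧ LeftMaximal T W ∧ RightMaximal T W)

/-- Strict lexicographic comparison of strings (a proper prefix is smaller). -/
def lexLt : List ℕ → List ℕ → Bool
  | [], [] => false
  | [], _ :: _ => true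
  | _ :: _, [] => false
  | a :: A, b :: B => decide (a < b) || (a == b && lexLt A B)

/-- Non-strict lexicographic comparison. -/
def lexLe (A B : List ℕ) : Bool := !(lexLt B A)

/-- The Burrows–Wheeler transform of `T`: the `i`-th character of `BWT T` is the last
character of the lexicographically `i`-th rotation of `T`. -/
def BWT (T : List ℕ) : List ℕ :=
  (((List.range T.length).map (rot T)).mergeSort lexLe).map (fun R => R.getLast!)

/-- The number of runs of a string, i.e. the number of maximal intervals on which all
characters are equal. -/
def numRuns : List ℕ → ℕ
  | [] => 0
  | [_] => 1
  | a :: b :: l => (if a = b then 0 else 1) + numRuns (b :: l)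


noncomputable section
open Classical

/-- `ℳ^r_T`: the set of rightmost maximal repeats of `T`: maximal repeats `W` such that
no string `WV` with `V` nonempty is left-maximal in `T`. -/
def RightmostMaxRepeats (T : List ℕ) : Finset (List ℕ) :=
  (MaxRepeats T).filter (fun W => ∀ V : List ℕ, V ≠ [] → ¬ LeftMaximal T (W ++ V))

/-- `Y` is the shortest right-maximal extension of `X` in `T`: the shortest
right-maximal string of `T` having `X` as a prefix. -/
def ShortestRightMaxExt (T X Y : List ℕ) : Prop :=
  X <+: Y ∧ RightMaximal T Y ∧
    ∀ Z : List ℕ, X <+: Z → RightMaximal T Z → Y.length ≤ Z.length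

/-- `ℱ^r_T`: pairs `(V, b)` with `V ∈ ℳ_T ∪ {ε}` and `b ∈ Σ^r_T(V)` such that either
`Vb` occurs exactly once in circular `T`, or the shortest right-maximal extension of
`Vb` is not a maximal repeat of `T`.  These pairs correspond to the suffix-tree edges
of `T` from maximal-repeat nodes to non-maximal-repeat nodes. -/
def Fr (T : List ℕ) : Finset (List ℕ × ℕ) :=
  ((insert ([] : List ℕ) (MaxRepeats T)) ×ˢ T.toFinset).filter
    (fun p => p.2 ∈ SigmaR T p.1 ∧
      ((Pset T (p.1 ++ [p.2])).card = 1 ∨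
        ∀ Y : List ℕ, ShortestRightMaxExt T (p.1 ++ [p.2]) Y → Y ∉ MaxRepeats T))

/-- `e_T`: the number of right extensions of maximal repeats of `T`, i.e. the number of
pairs `(V, b)` with `V ∈ ℳ_T ∪ {ε}` and `b ∈ Σ^r_T(V)`.  This equals the number of
arcs of the CDAWG of `T`. -/
def eCount (T : List ℕ) : ℕ :=
  ∑ V ∈ insert ([] : List ℕ) (MaxRepeats T), (SigmaR T V).card

/-- The next LZ77 factor, to be placed at position `k` of `T`, may be `F` if `F` is a
single character (every single character of `T` has a source among the `σ+1` distinct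
characters virtually preceding `T`), or if `F` has an occurrence in `T` starting at a
position `j` strictly before `k`. -/
def LZsource (T : List ℕ) (k : ℕ) (F : List ℕ) : Prop :=
  F.length = 1 ∨ ∃ j, j < k ∧ F <+: T.drop j

/-- `fs` is the LZ77 factorization of `T` (greedy: each factor is the longest prefix of
the remaining suffix admitting a source). -/
def IsLZ77 (T : List ℕ) (fs : List (List ℕ)) : Prop :=
  fs.flatten = T ∧ (∀ F ∈ fs, F ≠ []) ∧
    ∀ i, (h : i < fs.length) →
      LZsource T ((fs.take i).flatten).length (fs.get ⟨i, h⟩) ∧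
      ∀ F' : List ℕ, F' <+: T.drop ((fs.take i).flatten).length →
        (fs.get ⟨i, h⟩).length < F'.length →
          ¬ LZsource T ((fs.take i).flatten).length F'

/-- `N_T(X)`: the number of rotations of `T` lexicographically smaller than `X`. -/
def Nrank (T X : List ℕ) : ℕ :=
  ((List.range T.length).filter (fun i => lexLt (rot T i) X)).length

/-- The string `a b a² b a³ b ⋯ aˣ b #`. -/
def Tx (a b x : ℕ) : List ℕ :=
  (((List.range x).map (fun i => List.replicate (i + 1) a ++ [b])).flatten) ++ [0]

end

/-!
Comparing a rotation `R` with `Xc` amounts to comparing it with `X` unless `X` is a prefix of `R`,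
so `N_T(Xc) - N_T(X) = ∑_{d < c} |P_T(Xd)|` as soon as `X` is shorter than `T` (which a repeat
is, because the rotations of `T` are pairwise distinct). If `V` is not left-maximal and `aV`
occurs, then every occurrence of `Vd` is preceded by `a`, so moving one position to the left
matches the occurrences of `Vd` with those of `aVd`. Peeling the characters of `W` off one at a
time thus keeps `|P_T(W[i..m]d)| = |P_T(Wd)|` for all `i ≤ k` and all `d`.
-/

section Circular

variable {T X V : List ℕ}

lemma rot_eq_rotate {i : ℕ} (hi : i ≤ T.length) : rot T i = T.rotate i :=
  (List.rotate_eq_drop_append_take hi).symm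

lemma getD_rot {i j : ℕ} (hi : i ≤ T.length) (hj : j < T.length) :
    (rot T i).getD j 0 = T.getD ((i + j) % T.length) 0 := by
  rw [rot_eq_rotate hi, List.getD_eq_getElem?_getD, List.getElem?_rotate hj, add_comm,
    ← List.getD_eq_getElem?_getD]

lemma circOccAt_iff_prefix_rot {i : ℕ} (hi : i < T.length) (hX : X.length ≤ T.length) :
    CircOccAt T X i ↔ X <+: rot T i := by
  have hlen : X.length ≤ (rot T i).length := by rwa [rot_eq_rotate hi.le, List.length_rotate]
  simp only [CircOccAt, List.prefix_iff_getElem, hlen, exists_true_left]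
  refine forall₂_congr fun j hj => ?_
  rw [← getD_rot hi.le (by omega), List.getD_eq_getElem _ _ hj, List.getD_eq_getElem]

lemma mem_Pset {p : ℕ} : p ∈ Pset T X ↔ p < T.length ∧ CircOccAt T X p := by
  simp [Pset]

lemma circOccAt_of_prefix {Y : List ℕ} {p : ℕ} (h : X <+: Y) (hY : CircOccAt T Y p) :
    CircOccAt T X p := by
  obtain ⟨t, rfl⟩ := h
  intro j hj
  rw [← List.getD_append X t 0 j hj]
  exact hY j (by simp; omega)

lemma circOccAt_cons_iff {a q : ℕ} (hq : q < T.length) :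
    CircOccAt T (a :: X) q ↔ T.getD q 0 = a ∧ CircOccAt T X ((q + 1) % T.length) := by
  have shift (j : ℕ) : ((q + 1) % T.length + j) % T.length = (q + (j + 1)) % T.length := by
    rw [Nat.mod_add_mod]; ring_nf
  simp only [CircOccAt, List.length_cons, shift]
  constructor
  · intro h
    refine ⟨?_, fun j hj => h (j + 1) (by omega)⟩
    simpa [Nat.mod_eq_of_lt hq, eq_comm] using h 0 (by omega)
  · rintro ⟨h0, h⟩ (_ | j) hj
    · rw [List.getD_cons_zero, Nat.add_zero, Nat.mod_eq_of_lt hq, h0]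
    · exact h j (by omega)

lemma add_mod_add_mod_of_add_eq {n p a b : ℕ} (hp : p < n) (h : a + b = n) :
    ((p + a) % n + b) % n = p := by
  rw [Nat.mod_add_mod, add_assoc, h, Nat.add_mod_right, Nat.mod_eq_of_lt hp]

lemma OccursCirc.of_cons {a : ℕ} (h : OccursCirc T (a :: X)) : OccursCirc T X := by
  obtain ⟨q, hq⟩ := h
  obtain ⟨hqT, hocc⟩ := mem_Pset.mp hq
  exact ⟨_, mem_Pset.mpr ⟨Nat.mod_lt _ (by omega), ((circOccAt_cons_iff hqT).mp hocc).2⟩⟩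

lemma OccursCirc.drop (h : OccursCirc T X) : ∀ m, OccursCirc T (X.drop m)
  | 0 => h
  | m + 1 => by
    have hm := h.drop m
    rw [← List.tail_drop]
    cases hX : X.drop m with
    | nil => rwa [hX] at hm
    | cons a Y => rw [hX] at hm; exact hm.of_cons

lemma mem_SigmaL {a : ℕ} (h : OccursCirc T (a :: V)) : a ∈ SigmaL T V := by
  obtain ⟨q, hq⟩ := h
  obtain ⟨hqT, hocc⟩ := mem_Pset.mp hq
  refine Finset.mem_filter.mpr ⟨?_, q, hq⟩
  rw [List.mem_toFinset, ← ((circOccAt_cons_iff hqT).mp hocc).1, List.getD_eq_getElem _ _ hqT]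
  exact List.getElem_mem hqT

lemma eq_of_not_leftMaximal {a b : ℕ} (hnl : ¬ LeftMaximal T V) (ha : OccursCirc T (a :: V))
    (hb : OccursCirc T (b :: V)) : a = b :=
  Finset.card_le_one.mp (not_lt.mp hnl) _ (mem_SigmaL ha) _ (mem_SigmaL hb)

lemma card_Pset_cons_of_not_leftMaximal {a : ℕ} (hnl : ¬ LeftMaximal T V)
    (ha : OccursCirc T (a :: V)) (U : List ℕ) :
    (Pset T (a :: (V ++ U))).card = (Pset T (V ++ U)).card := by
  have hn : 0 < T.length := by
    obtain ⟨q, hq⟩ := ha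
    exact (mem_Pset.mp hq).1.pos
  refine Finset.card_nbij' (fun q => (q + 1) % T.length) (fun p => (p + (T.length - 1)) % T.length)
    ?_ ?_ ?_ ?_
  · intro q hq
    obtain ⟨hqT, hocc⟩ := mem_Pset.mp hq
    exact mem_Pset.mpr ⟨Nat.mod_lt _ hn, ((circOccAt_cons_iff hqT).mp hocc).2⟩
  · intro p hp
    obtain ⟨hpT, hocc⟩ := mem_Pset.mp hp
    set q := (p + (T.length - 1)) % T.length
    have hqT : q < T.length := Nat.mod_lt _ hn
    have hqp : (q + 1) % T.length = p := add_mod_add_mod_of_add_eq hpT (by omega)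
    have hext : CircOccAt T (T.getD q 0 :: (V ++ U)) q :=
      (circOccAt_cons_iff hqT).mpr ⟨rfl, hqp ▸ hocc⟩
    have hchar : T.getD q 0 = a := eq_of_not_leftMaximal hnl
      ⟨q, mem_Pset.mpr ⟨hqT, circOccAt_of_prefix (by simp) hext⟩⟩ ha
    exact mem_Pset.mpr ⟨hqT, hchar ▸ hext⟩
  · intro q hq
    exact add_mod_add_mod_of_add_eq (mem_Pset.mp hq).1 (by omega)
  · intro p hp
    exact add_mod_add_mod_of_add_eq (mem_Pset.mp hp).1 (by omega)

lemma card_Pset_drop_append (hW : OccursCirc T X) (U : List ℕ) :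
    ∀ m, (∀ j, 1 ≤ j → j ≤ m → ¬ LeftMaximal T (X.drop j)) →
      (Pset T (X.drop m ++ U)).card = (Pset T (X ++ U)).card
  | 0, _ => rfl
  | m + 1, hnl => by
    rw [← card_Pset_drop_append hW U m fun j hj1 hjm => hnl j hj1 (by omega), ← List.tail_drop]
    cases hX : X.drop m with
    | nil => rfl
    | cons a Y =>
      have hY : Y = X.drop (m + 1) := by rw [← List.tail_drop, hX, List.tail_cons]
      rw [List.tail_cons, List.cons_append,
        card_Pset_cons_of_not_leftMaximal (hY ▸ hnl (m + 1) (by omega) le_rfl) (hX ▸ hW.drop m)]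

end Circular

section Lexicographic

lemma lexLt_nil_right (R : List ℕ) : lexLt R [] = false := by
  cases R <;> rfl

lemma lexLt_eq_false_of_prefix {V R : List ℕ} (h : V <+: R) : lexLt R V = false := by
  obtain ⟨t, rfl⟩ := h
  induction V with
  | nil => exact lexLt_nil_right t
  | cons v V ih => simp [lexLt, ih]

lemma lexLt_append_singleton_iff {V R : List ℕ} (c : ℕ) (h : V.length < R.length) :
    lexLt R (V ++ [c]) = true ↔ lexLt R V = true ∨ ∃ d < c, V ++ [d] <+: R := by
  induction V generalizing R with
  | nil =>
    obtain _ | ⟨r, R⟩ := R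
    · simp at h
    · simp [lexLt, lexLt_nil_right]
  | cons v V ih =>
    obtain _ | ⟨r, R⟩ := R
    · simp at h
    · simp only [List.cons_append, lexLt, Bool.or_eq_true, Bool.and_eq_true, decide_eq_true_eq,
        beq_iff_eq, List.cons_prefix_cons, ih (Nat.lt_of_succ_lt_succ h)]
      aesop

lemma Nrank_eq_card_filter (T X : List ℕ) :
    Nrank T X = ((Finset.range T.length).filter fun i => lexLt (rot T i) X).card := by
  rw [Nrank, ← List.toFinset_range, ← List.toFinset_filter,
    List.toFinset_card_of_nodup (List.nodup_range.filter _)]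

lemma Nrank_append_singleton {T V : List ℕ} (c : ℕ) (hV : V.length < T.length) :
    Nrank T (V ++ [c]) = Nrank T V + ∑ d ∈ Finset.range c, (Pset T (V ++ [d])).card := by
  have hlen : ∀ i, V.length < (rot T i).length := fun i => by simp [rot]; omega
  have mem_Pset_snoc (d i : ℕ) : i ∈ Pset T (V ++ [d]) ↔ i < T.length ∧ V ++ [d] <+: rot T i := by
    rw [mem_Pset]
    exact and_congr_right fun hi => circOccAt_iff_prefix_rot hi (by simp; omega)
  have hsplit : ((Finset.range T.length).filter fun i => lexLt (rot T i) (V ++ [c])) =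
      ((Finset.range T.length).filter fun i => lexLt (rot T i) V) ∪
        (Finset.range c).biUnion fun d => Pset T (V ++ [d]) := by
    ext i
    simp only [Finset.mem_filter, Finset.mem_range, Finset.mem_union, Finset.mem_biUnion,
      mem_Pset_snoc, lexLt_append_singleton_iff c (hlen i)]
    aesop
  rw [Nrank_eq_card_filter, Nrank_eq_card_filter, hsplit, Finset.card_union_of_disjoint,
    Finset.card_biUnion]
  · intro d₁ _ d₂ _ hne
    refine Finset.disjoint_left.mpr fun i h₁ h₂ => hne ?_
    have p₁ := ((mem_Pset_snoc d₁ i).mp h₁).2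
    have p₂ := ((mem_Pset_snoc d₂ i).mp h₂).2
    simpa using (List.prefix_of_prefix_length_le p₁ p₂ (by simp)).eq_of_length (by simp)
  · refine Finset.disjoint_left.mpr fun i hlt hocc => ?_
    obtain ⟨d, -, hd⟩ := Finset.mem_biUnion.mp hocc
    have := lexLt_eq_false_of_prefix ((List.prefix_append V [d]).trans ((mem_Pset_snoc d i).mp hd).2)
    simp [this] at hlt

end Lexicographic

namespace Wellformed

variable {σ : ℕ} {T : List ℕ}

lemma getD_eq_zero_iff (hT : Wellformed σ T) {i : ℕ} (hi : i < T.length) :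
    T.getD i 0 = 0 ↔ i = T.length - 1 := by
  obtain ⟨S, rfl, hS⟩ := hT
  simp only [List.length_append, List.length_singleton, Nat.add_sub_cancel] at hi ⊢
  rcases (Nat.lt_succ_iff.mp hi).lt_or_eq with hiS | rfl
  · rw [List.getD_append _ _ _ _ hiS, List.getD_eq_getElem _ _ hiS]
    have := (hS _ (List.getElem_mem hiS)).1
    omega
  · simp

lemma rot_injOn (hT : Wellformed σ T) {p q : ℕ} (hp : p < T.length) (hq : q < T.length)
    (h : rot T p = rot T q) : p = q := by
  set j := T.length - 1 - p
  have hpj : (p + j) % T.length = T.length - 1 := by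
    rw [show p + j = T.length - 1 by omega, Nat.mod_eq_of_lt (by omega)]
  have hqj : (q + j) % T.length = T.length - 1 := by
    rw [← hT.getD_eq_zero_iff (Nat.mod_lt _ (by omega)), ← getD_rot hq.le (by omega), ← h,
      getD_rot hp.le (by omega), hpj, hT.getD_eq_zero_iff (by omega)]
  exact (Nat.ModEq.add_right_cancel' j (hqj.trans hpj.symm)).symm.eq_of_lt_of_lt hp hq

lemma length_lt_of_one_lt_card_Pset (hT : Wellformed σ T) {W : List ℕ}
    (h : 1 < (Pset T W).card) : W.length < T.length := by
  by_contra! hle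
  have take_eq_rot : ∀ p ∈ Pset T W, W.take T.length = rot T p := fun p hp => by
    obtain ⟨hpT, hocc⟩ := mem_Pset.mp hp
    refine ((circOccAt_iff_prefix_rot hpT (by simp)).mp
      (circOccAt_of_prefix (List.take_prefix _ _) hocc)).eq_of_length ?_
    simp [rot_eq_rotate hpT.le]
    omega
  obtain ⟨p, hp, q, hq, hne⟩ := Finset.one_lt_card.mp h
  exact hne (hT.rot_injOn (mem_Pset.mp hp).1 (mem_Pset.mp hq).1
    ((take_eq_rot p hp).symm.trans (take_eq_rot q hq)))

end Wellformed

theorem child_interval_offsets_general (σ : ℕ) (T : List ℕ) (hT : Wellformed σ T)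
    (W : List ℕ) (k : ℕ) (hW : W ∈ MaxRepeats T)
    (hnl : ∀ i, 2 ≤ i → i ≤ k → ¬ LeftMaximal T (W.drop (i - 1)))
    (c : ℕ) :
    ∀ i, 1 ≤ i → i ≤ k →
      (Nrank T (W.drop (i - 1) ++ [c]) : ℤ) - (Nrank T (W.drop (i - 1)) : ℤ)
        = (Nrank T (W ++ [c]) : ℤ) - (Nrank T W : ℤ) := by
  intro i hi hik
  have hrep : 1 < (Pset T W).card := (Finset.mem_filter.mp hW).2.2.1
  have hWT : W.length < T.length := hT.length_lt_of_one_lt_card_Pset hrep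
  have hcard (d : ℕ) : (Pset T (W.drop (i - 1) ++ [d])).card = (Pset T (W ++ [d])).card :=
    card_Pset_drop_append (Finset.card_pos.mp (by omega)) [d] (i - 1)
      fun j hj hji => by simpa using hnl (j + 1) (by omega) (by omega)
  rw [Nrank_append_singleton c (by simp; omega), Nrank_append_singleton c hWT,
    Finset.sum_congr rfl fun d _ => hcard d]
  push_cast
  ring

/-- Let `W ∈ [1..σ]^m` be a maximal repeat of `T` and let `k ∈ [1..m]`
be such that `W[i..m]` is not left-maximal for every `i ∈ [2..k]`.  Then for every
character `c ∈ [0..σ]` and every `i ∈ [1..k]`,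
`N_T(W[i..m]c) − N_T(W[i..m]) = N_T(Wc) − N_T(W)`, where `N_T(X)` is the number of
rotations of `T` lexicographically smaller than `X`. -/
theorem child_interval_offsets (σ : ℕ) (T : List ℕ) (hT : Wellformed σ T)
    (W : List ℕ) (k : ℕ) (hW : W ∈ MaxRepeats T) (hk1 : 1 ≤ k) (hk2 : k ≤ W.length)
    (hnl : ∀ i, 2 ≤ i → i ≤ k → ¬ LeftMaximal T (W.drop (i - 1)))
    (c : ℕ) (hc : c ≤ σ) :
    ∀ i, 1 ≤ i → i ≤ k →
      (Nrank T (W.drop (i - 1) ++ [c]) : ℤ) - (Nrank T (W.drop (i - 1)) : ℤ)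
        = (Nrank T (W ++ [c]) : ℤ) - (Nrank T W : ℤ) :=
  child_interval_offsets_general σ T hT W k hW hnl c
end
end

section
/- Let σ ≥ 2 and k ≥ 2, and suppose that every string in [1..σ]^k occurs in circular T (e.g., T contains a de Bruijn sequence of order k). Then the number of runs of the Burrows–Wheeler transform of T satisfies r_T ≥ σ^{k−1}(σ−1). -/
/-! Basic definitions: strings are lists of naturals; the separator `#` is `0`;
the alphabet is `Σ = [1..σ]`. Occurrences are taken in the circular version of `T`. -/

noncomputable section
open Classical

/-! Sort the rotations of `T`. For a word `W` of length `k - 1 < |T|`, the sorted rotations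
with prefix `W` form a contiguous block, and the BWT characters in this block are exactly the
characters `a` such that `aW` occurs in circular `T`: all `σ` letters. So the BWT changes
character at least `σ - 1` times inside each block, and the blocks of distinct words are
disjoint. That `k - 1 < |T|` holds because each of the `σ^k > k` words of length `k` occurs in `T`,
and distinct words of equal length occur at distinct positions. -/

open Finset

theorem List.IsPrefix.of_le_of_le {α : Type*} [LinearOrder α] :
    ∀ {W A B C : List α}, W <+: A → W <+: C → A ≤ B → B ≤ C → W <+: B
  | [], _, _, _, _, _, _, _ => List.nil_prefix
  | w :: W, _, [], _, ⟨A, rfl⟩, _, hAB, _ => absurd hAB (not_le.2 (List.nil_lt_cons _ _))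
  | w :: W, _, b :: B, _, ⟨A, rfl⟩, ⟨C, rfl⟩, hAB, hBC => by
    rw [← not_lt, List.cons_append, List.cons_lt_cons_iff] at hAB hBC
    obtain rfl : w = b := le_antisymm (by grind) (by grind)
    exact (List.prefix_cons_inj w).2
      (of_le_of_le ⟨A, rfl⟩ ⟨C, rfl⟩ (not_lt.1 (by grind)) (not_lt.1 (by grind)))

theorem List.Pairwise.ordConnected_prefix_indices {α : Type*} [LinearOrder α]
    {S : List (List α)} (hS : S.Pairwise (· ≤ ·)) (W : List α) :
    (↑((Finset.range S.length).filter fun p => W <+: S.getD p []) : Set ℕ).OrdConnected := by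
  have hmono : ∀ {p q}, p ≤ q → q < S.length → S.getD p [] ≤ S.getD q [] := by
    intro p q hpq hq
    rw [getD_eq_getElem _ _ (by omega), getD_eq_getElem _ _ hq]
    exact hS.rel_get_of_le (a := ⟨p, by omega⟩) (b := ⟨q, hq⟩) hpq
  refine ⟨fun p hp q hq r ⟨hpr, hrq⟩ => ?_⟩
  simp only [coe_filter, Finset.mem_range, Set.mem_ofPred_eq] at hp hq ⊢
  exact ⟨by omega, hp.2.of_le_of_le hq.2 (hmono hpr (by omega)) (hmono hrq hq.1)⟩

theorem card_image_Icc_le {α : Type*} [DecidableEq α] (f : ℕ → α) {l m : ℕ}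
    (hlm : l ≤ m) :
    #((Icc l m).image f) ≤ #((Ico l m).filter fun p => f p ≠ f (p + 1)) + 1 := by
  obtain ⟨d, rfl⟩ := Nat.exists_eq_add_of_le hlm
  induction d with
  | zero => simp
  | succ d ih =>
    have hIcc : Icc l (l + (d + 1)) = insert (l + d + 1) (Icc l (l + d)) := by
      ext; simp only [mem_Icc, mem_insert]; omega
    have hIco : Ico l (l + (d + 1)) = insert (l + d) (Ico l (l + d)) := by
      ext; simp only [mem_Ico, mem_insert]; omega
    specialize ih (by omega)
    rw [hIcc, image_insert, hIco, filter_insert]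
    by_cases hd : f (l + d) = f (l + d + 1)
    · rwa [insert_eq_of_mem (mem_image.2 ⟨l + d, by simp, hd⟩), if_neg (not_not.2 hd)]
    · have hnew : l + d ∉ (Ico l (l + d)).filter fun p => f p ≠ f (p + 1) := by simp
      rw [if_pos hd, card_insert_of_notMem hnew]
      exact (card_insert_le _ _).trans (by omega)

theorem Set.OrdConnected.card_image_le {α : Type*} [DecidableEq α] {I : Finset ℕ}
    (hI : (I : Set ℕ).OrdConnected) (f : ℕ → α) :
    #(I.image f) ≤ #(I.filter fun p => p + 1 ∈ I ∧ f p ≠ f (p + 1)) + 1 := by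
  rcases I.eq_empty_or_nonempty with rfl | hne
  · simp
  obtain ⟨l, m, hlm, rfl⟩ : ∃ l m, l ≤ m ∧ I = Finset.Icc l m := by
    refine ⟨I.min' hne, I.max' hne, I.min'_le _ (I.max'_mem hne), Finset.ext fun p => ?_⟩
    refine ⟨fun hp => Finset.mem_Icc.2 ⟨I.min'_le p hp, I.le_max' p hp⟩, fun hp => ?_⟩
    exact hI.out (I.min'_mem hne) (I.max'_mem hne) (Finset.mem_Icc.1 hp)
  have hfilter : ((Finset.Icc l m).filter fun p => p + 1 ∈ Finset.Icc l m ∧ f p ≠ f (p + 1)) =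
      (Finset.Ico l m).filter fun p => f p ≠ f (p + 1) := by
    ext p; simp only [Finset.mem_filter, Finset.mem_Icc, Finset.mem_Ico]; grind
  rw [hfilter]
  exact card_image_Icc_le f hlm

theorem lexLt_iff_lt : ∀ A B : List ℕ, lexLt A B = true ↔ A < B
  | [], [] => by simp [lexLt]
  | [], _ :: _ => by simp [lexLt]
  | _ :: _, [] => by simp [lexLt]
  | a :: A, b :: B => by simp [lexLt, List.cons_lt_cons_iff, lexLt_iff_lt A B]

theorem lexLe_iff_le (A B : List ℕ) : lexLe A B = true ↔ A ≤ B := by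
  rw [lexLe, Bool.not_eq_true', ← Bool.not_eq_true, lexLt_iff_lt, not_lt]

def sortedRotations (T : List ℕ) : List (List ℕ) :=
  ((List.range T.length).map (rot T)).mergeSort lexLe

theorem BWT_eq_map_getLast! (T : List ℕ) : BWT T = (sortedRotations T).map List.getLast! := rfl

theorem pairwise_sortedRotations (T : List ℕ) : (sortedRotations T).Pairwise (· ≤ ·) :=
  (List.pairwise_mergeSort (fun A B C => by simpa only [lexLe_iff_le] using le_trans)
    (fun A B => by simpa [lexLe_iff_le] using le_total A B) _).imp (lexLe_iff_le _ _).1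

theorem rotate_mem_sortedRotations {T : List ℕ} (hT : T ≠ []) (j : ℕ) :
    T.rotate j ∈ sortedRotations T := by
  have hj : j % T.length < T.length := Nat.mod_lt _ (List.length_pos_iff.2 hT)
  rw [sortedRotations, (List.mergeSort_perm _ _).mem_iff, List.mem_map]
  refine ⟨j % T.length, List.mem_range.2 hj, ?_⟩
  rw [rot, ← List.rotate_eq_drop_append_take hj.le, List.rotate_mod]

theorem CircOccAt.eq_map_range {T W : List ℕ} {i : ℕ} (h : CircOccAt T W i) :
    W = (List.range W.length).map fun j => T.getD ((i + j) % T.length) 0 := by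
  refine List.ext_getElem (by simp) fun j hj _ => ?_
  simpa [← List.getD_eq_getElem _ 0 hj] using h j hj

theorem CircOccAt.prefix_rotate {T W : List ℕ} {i : ℕ} (h : CircOccAt T W i)
    (hW : W.length ≤ T.length) : W <+: T.rotate i := by
  rw [List.prefix_iff_eq_take]
  refine List.ext_getElem (by simpa using hW) fun j hj _ => ?_
  have hT : 0 < T.length := by omega
  have := h j hj
  rw [List.getD_eq_getElem _ _ hj, List.getD_eq_getElem _ _ (Nat.mod_lt _ hT)] at this
  simp [this, List.getElem_rotate, Nat.add_comm j]

theorem List.IsPrefix.rotate_one {α : Type*} [Inhabited α] {a : α} {W L : List α}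
    (h : a :: W <+: L) : W <+: L.rotate 1 ∧ (L.rotate 1).getLast! = a := by
  obtain ⟨R, rfl⟩ := h
  simp [List.getLast!_eq_getLast?_getD]

def runBoundaries (s : List ℕ) : Finset ℕ :=
  (Finset.range (s.length - 1)).filter fun p => s.getD p 0 ≠ s.getD (p + 1) 0

theorem card_runBoundaries_cons_cons (a b : ℕ) (l : List ℕ) :
    #(runBoundaries (a :: b :: l)) = #(runBoundaries (b :: l)) + if a = b then 0 else 1 := by
  simp only [runBoundaries, card_filter, List.length_cons, Nat.add_sub_cancel]
  rw [sum_range_succ']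
  simp

theorem card_runBoundaries_le_numRuns : ∀ s : List ℕ, #(runBoundaries s) ≤ numRuns s
  | [] => by simp [runBoundaries]
  | [_] => by simp [runBoundaries]
  | a :: b :: l => by
    rw [card_runBoundaries_cons_cons, numRuns, add_comm]
    exact Nat.add_le_add_left (card_runBoundaries_le_numRuns (b :: l)) _

def words (σ m : ℕ) : Finset (List ℕ) :=
  (Fintype.piFinset fun _ : Fin m => Finset.Icc 1 σ).image List.ofFn

theorem mem_words {σ m : ℕ} {W : List ℕ} :
    W ∈ words σ m ↔ W.length = m ∧ ∀ c ∈ W, 1 ≤ c ∧ c ≤ σ := by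
  simp only [words, mem_image, Fintype.mem_piFinset, Finset.mem_Icc]
  constructor
  · rintro ⟨f, hf, rfl⟩
    simpa [List.mem_ofFn] using hf
  · rintro ⟨rfl, hW⟩
    exact ⟨fun i => W[i], fun i => hW _ (List.getElem_mem _), List.ofFn_getElem⟩

theorem card_words (σ m : ℕ) : #(words σ m) = σ ^ m := by
  rw [words, card_image_of_injective _ List.ofFn_injective, Fintype.card_piFinset,
    prod_const, Nat.card_Icc, Finset.card_univ, Fintype.card_fin, Nat.add_sub_cancel]

theorem cons_mem_words {σ m a : ℕ} {W : List ℕ} (ha : a ∈ Finset.Icc 1 σ)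
    (hW : W ∈ words σ m) :
    a :: W ∈ words σ (m + 1) := by
  rw [mem_words] at hW ⊢
  exact ⟨by simp [hW.1], by simpa [Finset.mem_Icc.1 ha] using hW.2⟩

theorem pow_le_length_of_forall_occursCirc {σ k : ℕ} {T : List ℕ}
    (hall : ∀ W ∈ words σ k, OccursCirc T W) : σ ^ k ≤ T.length := by
  have hsub : words σ k ⊆ (Finset.range T.length).image fun i =>
      (List.range k).map fun j => T.getD ((i + j) % T.length) 0 := by
    intro W hW
    obtain ⟨i, hi⟩ := hall W hW
    rw [Pset, Finset.mem_filter] at hi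
    rw [mem_image]
    exact ⟨i, hi.1, by rw [hi.2.eq_map_range, (mem_words.1 hW).1]⟩
  simpa [card_words] using (card_le_card hsub).trans card_image_le

def rotationBlock (T W : List ℕ) : Finset ℕ :=
  (Finset.range (sortedRotations T).length).filter fun p => W <+: (sortedRotations T).getD p []

def blockBoundaries (T W : List ℕ) : Finset ℕ :=
  (rotationBlock T W).filter fun p =>
    p + 1 ∈ rotationBlock T W ∧ (BWT T).getD p 0 ≠ (BWT T).getD (p + 1) 0

theorem mem_image_BWT_rotationBlock {T W : List ℕ} {a i : ℕ} (h : CircOccAt T (a :: W) i)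
    (hW : W.length < T.length) :
    a ∈ (rotationBlock T W).image fun p => (BWT T).getD p 0 := by
  obtain ⟨hpre, hlast⟩ := (h.prefix_rotate (by simp; omega)).rotate_one
  rw [List.rotate_rotate] at hpre hlast
  have hT : T ≠ [] := by rintro rfl; simp at hW
  obtain ⟨p, hp, hget⟩ := List.mem_iff_getElem.1 (rotate_mem_sortedRotations hT (i + 1))
  refine mem_image.2 ⟨p, ?_, ?_⟩
  · rw [rotationBlock, mem_filter, List.getD_eq_getElem _ _ hp, hget]
    exact ⟨Finset.mem_range.2 hp, hpre⟩
  · rw [BWT_eq_map_getLast!, List.getD_eq_getElem _ _ (by simpa using hp), List.getElem_map,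
      hget, hlast]

theorem sub_one_le_card_blockBoundaries {σ : ℕ} {T W : List ℕ}
    (hall : ∀ a ∈ Finset.Icc 1 σ, OccursCirc T (a :: W)) (hW : W.length < T.length) :
    σ - 1 ≤ #(blockBoundaries T W) := by
  have hsub : Finset.Icc 1 σ ⊆ (rotationBlock T W).image fun p => (BWT T).getD p 0 := by
    intro a ha
    obtain ⟨i, hi⟩ := hall a ha
    exact mem_image_BWT_rotationBlock (mem_filter.1 hi).2 hW
  have := (card_le_card hsub).trans
    ((pairwise_sortedRotations T).ordConnected_prefix_indices W |>.card_image_le _)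
  rw [Nat.card_Icc, Nat.add_sub_cancel] at this
  exact Nat.sub_le_of_le_add this

theorem blockBoundaries_subset_runBoundaries (T W : List ℕ) :
    blockBoundaries T W ⊆ runBoundaries (BWT T) := by
  intro p hp
  simp only [blockBoundaries, rotationBlock, mem_filter, Finset.mem_range] at hp
  simp only [runBoundaries, mem_filter, Finset.mem_range, BWT_eq_map_getLast!, List.length_map]
  exact ⟨by omega, hp.2.2⟩

theorem disjoint_blockBoundaries {T W W' : List ℕ} (hlen : W.length = W'.length)
    (hne : W ≠ W') :
    Disjoint (blockBoundaries T W) (blockBoundaries T W') := by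
  refine Finset.disjoint_left.2 fun p hp hp' => hne ?_
  simp only [blockBoundaries, rotationBlock, mem_filter] at hp hp'
  exact (List.prefix_of_prefix_length_le hp.1.2 hp'.1.2 hlen.le).eq_of_length hlen

theorem deBruijn_runs_lower_bound_general (σ : ℕ) (T : List ℕ) (k : ℕ)
    (hσ : 2 ≤ σ) (hk : 2 ≤ k)
    (hall : ∀ W : List ℕ, W.length = k → (∀ c ∈ W, 1 ≤ c ∧ c ≤ σ) →
      OccursCirc T W) :
    σ ^ (k - 1) * (σ - 1) ≤ numRuns (BWT T) := by
  have hwords : ∀ W ∈ words σ k, OccursCirc T W := fun W hW =>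
    hall W (mem_words.1 hW).1 (mem_words.1 hW).2
  have hkn : k - 1 < T.length :=
    (Nat.sub_lt (by omega) one_pos).trans ((Nat.lt_pow_self hσ).trans_le
      (pow_le_length_of_forall_occursCirc hwords))
  have hcons : ∀ W ∈ words σ (k - 1), ∀ a ∈ Finset.Icc 1 σ, OccursCirc T (a :: W) :=
    fun W hW a ha => hwords _ (Nat.sub_add_cancel (by omega : 1 ≤ k) ▸ cons_mem_words ha hW)
  calc σ ^ (k - 1) * (σ - 1) = ∑ _W ∈ words σ (k - 1), (σ - 1) := by
        rw [sum_const, card_words, smul_eq_mul]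
    _ ≤ ∑ W ∈ words σ (k - 1), #(blockBoundaries T W) := sum_le_sum fun W hW =>
        sub_one_le_card_blockBoundaries (hcons W hW) ((mem_words.1 hW).1 ▸ hkn)
    _ = #((words σ (k - 1)).biUnion (blockBoundaries T)) :=
        (card_biUnion fun W hW W' hW' hne =>
          disjoint_blockBoundaries ((mem_words.1 hW).1.trans (mem_words.1 hW').1.symm) hne).symm
    _ ≤ #(runBoundaries (BWT T)) :=
        card_le_card (biUnion_subset.2 fun W _ => blockBoundaries_subset_runBoundaries T W)
    _ ≤ numRuns (BWT T) := card_runBoundaries_le_numRuns _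

/-- If `σ ≥ 2`, `k ≥ 2` and every string in `[1..σ]^k` occurs in
circular `T` (e.g. `T` contains a de Bruijn sequence of order `k`), then the number of
runs of the Burrows–Wheeler transform of `T` satisfies `r_T ≥ σ^{k−1}(σ−1)`. -/
theorem deBruijn_runs_lower_bound (σ : ℕ) (T : List ℕ) (hT : Wellformed σ T) (k : ℕ)
    (hσ : 2 ≤ σ) (hk : 2 ≤ k)
    (hall : ∀ W : List ℕ, W.length = k → (∀ c ∈ W, 1 ≤ c ∧ c ≤ σ) →
      OccursCirc T W) :
    σ ^ (k - 1) * (σ - 1) ≤ numRuns (BWT T) :=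
  deBruijn_runs_lower_bound_general σ T k hσ hk hall
end
end
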